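/- If g is a strict vector k-coloring of G and h is a strict vector k-coloring of H, then the map (u,v) ↦ g(u) ⊗ h(v) (tensor product of vectors) is a strict vector k-coloring of the Cartesian product G □ H. -/

import Mathlib

/-!
The coordinates of `x ⊗ y` are the products `x i * y j`, so inner products multiply:
`⟪x ⊗ y, x' ⊗ y'⟫ = ⟪x, x'⟫ ⟪y, y'⟫`. Hence tensors of unit vectors are unit vectors, and along
an edge of `G □ H` one factor is an edge of `G` or `H` (contributing `-1/(k-1)`) while the other
is a vertex paired with itself (contributing `1`).
-/

namespace EuclideanSpace

variable {𝕜 : Type*} [RCLike 𝕜] {ι κ : Type*}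

noncomputable def tensor (x : EuclideanSpace 𝕜 ι) (y : EuclideanSpace 𝕜 κ) :
    EuclideanSpace 𝕜 (ι × κ) :=
  WithLp.toLp 2 fun p => x p.1 * y p.2

@[simp]
theorem tensor_apply (x : EuclideanSpace 𝕜 ι) (y : EuclideanSpace 𝕜 κ) (p : ι × κ) :
    tensor x y p = x p.1 * y p.2 := rfl

variable [Fintype ι] [Fintype κ]

theorem inner_tensor (x x' : EuclideanSpace 𝕜 ι) (y y' : EuclideanSpace 𝕜 κ) :
    inner 𝕜 (tensor x y) (tensor x' y') = inner 𝕜 x x' * inner 𝕜 y y' := by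
  simp only [PiLp.inner_apply, tensor_apply, RCLike.inner_apply, map_mul,
    Fintype.sum_prod_type, Finset.sum_mul_sum]
  refine Finset.sum_congr rfl fun i _ => Finset.sum_congr rfl fun j _ => ?_
  ring

theorem norm_tensor (x : EuclideanSpace 𝕜 ι) (y : EuclideanSpace 𝕜 κ) :
    ‖tensor x y‖ = ‖x‖ * ‖y‖ := by
  have h := congrArg RCLike.re (inner_tensor x x y y)
  rw [inner_self_eq_norm_sq_to_K, inner_self_eq_norm_sq_to_K, inner_self_eq_norm_sq_to_K,
    ← mul_pow, ← RCLike.ofReal_mul] at h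
  simp only [← RCLike.ofReal_pow, RCLike.ofReal_re] at h
  exact (pow_left_inj₀ (norm_nonneg _) (by positivity) two_ne_zero).1 h

end EuclideanSpace

open EuclideanSpace

theorem stmt8 {U W : Type*} (G : SimpleGraph U) (H : SimpleGraph W) (k : ℝ)
    {d₁ d₂ : ℕ} (g : U → EuclideanSpace ℝ (Fin d₁)) (h : W → EuclideanSpace ℝ (Fin d₂))
    (hgu : ∀ u, ‖g u‖ = 1) (hhu : ∀ v, ‖h v‖ = 1)
    (hg : ∀ u u', G.Adj u u' → (inner ℝ (g u) (g u') : ℝ) = -(1 / (k - 1)))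
    (hh : ∀ v v', H.Adj v v' → (inner ℝ (h v) (h v') : ℝ) = -(1 / (k - 1)))
    (φ : U × W → EuclideanSpace ℝ (Fin d₁ × Fin d₂))
    (hφ : ∀ a p, φ a p = g a.1 p.1 * h a.2 p.2) :
    (∀ a, ‖φ a‖ = 1) ∧
    ∀ a b, (G.boxProd H).Adj a b → (inner ℝ (φ a) (φ b) : ℝ) = -(1 / (k - 1)) := by
  obtain rfl : φ = fun a => tensor (g a.1) (h a.2) := funext fun a => by ext p; exact hφ a p
  refine ⟨fun a => by rw [norm_tensor, hgu, hhu, mul_one], ?_⟩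
  rintro ⟨u, v⟩ ⟨u', v'⟩ (⟨hG, rfl⟩ | ⟨hH, rfl⟩)
  · rw [inner_tensor, hg u u' hG, real_inner_self_eq_norm_sq, hhu, one_pow, mul_one]
  · rw [inner_tensor, hh v v' hH, real_inner_self_eq_norm_sq, hgu, one_pow, one_mul]
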